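/- arXiv:1707.04479 — 2 statements merged into one kernel-verified Lean document; each statement's English description precedes it below -/
import Mathlib

section
/- Let f : [0,1] → [0,1] be continuous and topologically mixing with a Markov partition P having at least three partition intervals. If the transition matrix A(f,P) is locally eventually onto (for each partition interval I there exists n with Aⁿ_{IJ} ≥ 1 for all J), then f is locally eventually onto: for every nonempty open U ⊆ [0,1] there exists m with f^m(U) = [0,1]. -/
open Set

abbrev UI := unitInterval

/-- Critical points: the endpoints together with the points near which `f` is not
strictly monotone. -/
def Crit (f : UI → UI) : Set UI :=
  {0, 1} ∪ {x | ∀ U ∈ nhds x, ¬ StrictMonoOn f U ∧ ¬ StrictAntiOn f U}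

/-- Topological mixing. -/
def Mixing (f : UI → UI) : Prop :=
  ∀ U V : Set UI, IsOpen U → IsOpen V → U.Nonempty → V.Nonempty →
    ∃ N, ∀ n ≥ N, (f^[n] '' U ∩ V).Nonempty

/-- Slack Markov partition for `f`. -/
def SlackPartition (f : UI → UI) (P : Set UI) : Prop :=
  P.Countable ∧ IsClosed P ∧ MapsTo f P P ∧ f '' Crit f ⊆ P

/-- `J` is a partition interval: a connected component of the complement of `P`. -/
def IsPartInt (P : Set UI) (J : Set UI) : Prop :=
  ∃ x ∈ Pᶜ, J = connectedComponentIn Pᶜ x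

/-- There is a path of length `n` from `J` to `K` in the transition graph `Γ(f,P)`;
equivalently the matrix entry `Aⁿ_{JK}` is at least 1. -/
def PathFromTo (f : UI → UI) (P : Set UI) (n : ℕ) (J K : Set UI) : Prop :=
  ∃ c : ℕ → Set UI, c 0 = J ∧ c n = K ∧ (∀ i ≤ n, IsPartInt P (c i)) ∧
    ∀ i < n, c (i + 1) ⊆ f '' c i

open Filter

/-!
A nonempty open set `U` contains a nondegenerate closed interval `K`. By mixing, a single
iterate `f^[n] '' K` meets three distinct partition intervals; being an interval, it then
contains the middle one, `J`. Since `A(f,P)` is locally eventually onto, some `f^[m] '' J`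
contains every partition interval, hence the complement of `P`, which is dense because `P`
is countable. The set `f^[m + n] '' K` is compact, so closed, and therefore is all of `[0,1]`.
-/

instance OrderTopology.locallyConnectedSpace {α : Type*}
    [ConditionallyCompleteLinearOrder α] [DenselyOrdered α] [TopologicalSpace α]
    [OrderTopology α] : LocallyConnectedSpace α :=
  locallyConnectedSpace_iff_connected_subsets.2 fun _ _ hU =>
    let ⟨a, b, _, hab, hsub⟩ := exists_Icc_mem_subset_of_mem_nhds hU
    ⟨Icc a b, hab, isPreconnected_Icc, hsub⟩

theorem Set.Countable.dense_compl_of_baireSpace {X : Type*} [TopologicalSpace X] [T1Space X]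
    [BaireSpace X] [∀ x : X, (nhdsWithin x {x}ᶜ).NeBot] {s : Set X} (hs : s.Countable) :
    Dense sᶜ := by
  have hcompl : sᶜ = ⋂ x ∈ s, ({x}ᶜ : Set X) := by
    rw [← compl_iUnion₂, biUnion_of_singleton]
  rw [hcompl]
  exact dense_biInter_of_isOpen (fun x _ => isOpen_compl_singleton) hs
    (fun x _ => dense_compl_singleton x)

theorem Set.OrdConnected.subset_of_mem_between {α : Type*} [LinearOrder α] {W J : Set α}
    (hW : W.OrdConnected) (hJ : J.OrdConnected) {a b c : α} (ha : a ∈ W) (hc : c ∈ W)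
    (hb : b ∈ J) (haJ : a ∉ J) (hcJ : c ∉ J) (hab : a ≤ b) (hbc : b ≤ c) : J ⊆ W := by
  intro z hz
  have haz : a ≤ z := le_of_not_gt fun hza => haJ (hJ.out hz hb ⟨hza.le, hab⟩)
  have hzc : z ≤ c := le_of_not_gt fun hcz => hcJ (hJ.out hb hz ⟨hbc, hcz.le⟩)
  exact hW.out ha hc ⟨haz, hzc⟩

theorem Set.OrdConnected.subset_of_inter_nonempty_three {α : Type*} [LinearOrder α]
    {W J₁ J₂ J₃ : Set α} (hW : W.OrdConnected) (h₁ : J₁.OrdConnected) (h₂ : J₂.OrdConnected)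
    (h₃ : J₃.OrdConnected) (d₁₂ : Disjoint J₁ J₂) (d₁₃ : Disjoint J₁ J₃)
    (d₂₃ : Disjoint J₂ J₃) (hW₁ : (W ∩ J₁).Nonempty) (hW₂ : (W ∩ J₂).Nonempty)
    (hW₃ : (W ∩ J₃).Nonempty) : J₁ ⊆ W ∨ J₂ ⊆ W ∨ J₃ ⊆ W := by
  obtain ⟨x₁, hx₁W, hx₁⟩ := hW₁
  obtain ⟨x₂, hx₂W, hx₂⟩ := hW₂
  obtain ⟨x₃, hx₃W, hx₃⟩ := hW₃
  have n₁₂ := d₁₂.notMem_of_mem_left hx₁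
  have n₁₃ := d₁₃.notMem_of_mem_left hx₁
  have n₂₁ := d₁₂.notMem_of_mem_right hx₂
  have n₂₃ := d₂₃.notMem_of_mem_left hx₂
  have n₃₁ := d₁₃.notMem_of_mem_right hx₃
  have n₃₂ := d₂₃.notMem_of_mem_right hx₃
  rcases le_total x₁ x₂ with h12 | h21
  · rcases le_total x₂ x₃ with h23 | h32
    · exact Or.inr (Or.inl (hW.subset_of_mem_between h₂ hx₁W hx₃W hx₂ n₁₂ n₃₂ h12 h23))
    · rcases le_total x₁ x₃ with h13 | h31
      · exact Or.inr (Or.inr (hW.subset_of_mem_between h₃ hx₁W hx₂W hx₃ n₁₃ n₂₃ h13 h32))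
      · exact Or.inl (hW.subset_of_mem_between h₁ hx₃W hx₂W hx₁ n₃₁ n₂₁ h31 h12)
  · rcases le_total x₁ x₃ with h13 | h31
    · exact Or.inl (hW.subset_of_mem_between h₁ hx₂W hx₃W hx₁ n₂₁ n₃₁ h21 h13)
    · rcases le_total x₂ x₃ with h23 | h32
      · exact Or.inr (Or.inr (hW.subset_of_mem_between h₃ hx₂W hx₁W hx₃ n₂₃ n₁₃ h23 h31))
      · exact Or.inr (Or.inl (hW.subset_of_mem_between h₂ hx₃W hx₁W hx₂ n₃₂ n₁₂ h32 h21))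

theorem Mixing.eventually_image_inter_nonempty {f : UI → UI} (hmix : Mixing f) {U V : Set UI}
    (hU : IsOpen U) (hV : IsOpen V) (hU' : U.Nonempty) (hV' : V.Nonempty) :
    ∀ᶠ n in atTop, (f^[n] '' U ∩ V).Nonempty :=
  eventually_atTop.2 (hmix U V hU hV hU' hV')

namespace IsPartInt

variable {P J K : Set UI}

theorem nonempty (hJ : IsPartInt P J) : J.Nonempty := by
  obtain ⟨x, hx, rfl⟩ := hJ
  exact ⟨x, mem_connectedComponentIn hx⟩

theorem isOpen (hP : IsClosed P) (hJ : IsPartInt P J) : IsOpen J := by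
  obtain ⟨x, -, rfl⟩ := hJ
  exact hP.isOpen_compl.connectedComponentIn

theorem ordConnected (hJ : IsPartInt P J) : J.OrdConnected := by
  obtain ⟨x, -, rfl⟩ := hJ
  exact isPreconnected_connectedComponentIn.ordConnected

theorem disjoint (hJ : IsPartInt P J) (hK : IsPartInt P K) (hJK : J ≠ K) : Disjoint J K := by
  obtain ⟨x, -, rfl⟩ := hJ
  obtain ⟨y, -, rfl⟩ := hK
  refine Set.disjoint_left.2 fun z hzx hzy => hJK ?_
  rw [connectedComponentIn_eq hzx, connectedComponentIn_eq hzy]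

end IsPartInt

theorem PathFromTo.subset_image_iterate {f : UI → UI} {P : Set UI} {n : ℕ} {J K : Set UI}
    (h : PathFromTo f P n J K) : K ⊆ f^[n] '' J := by
  obtain ⟨c, rfl, rfl, -, hstep⟩ := h
  suffices ∀ i ≤ n, c i ⊆ f^[i] '' c 0 from this n le_rfl
  intro i
  induction i with
  | zero => simp
  | succ k ih =>
    intro hk
    rw [Function.iterate_succ', image_comp]
    exact (hstep k hk).trans (image_mono (ih (k.le_succ.trans hk)))

theorem exists_isPartInt_subset_of_three {P W J₁ J₂ J₃ : Set UI} (hW : W.OrdConnected)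
    (h₁ : IsPartInt P J₁) (h₂ : IsPartInt P J₂) (h₃ : IsPartInt P J₃) (h₁₂ : J₁ ≠ J₂)
    (h₁₃ : J₁ ≠ J₃) (h₂₃ : J₂ ≠ J₃) (hW₁ : (W ∩ J₁).Nonempty) (hW₂ : (W ∩ J₂).Nonempty)
    (hW₃ : (W ∩ J₃).Nonempty) : ∃ J, IsPartInt P J ∧ J ⊆ W := by
  rcases hW.subset_of_inter_nonempty_three h₁.ordConnected h₂.ordConnected h₃.ordConnected
    (h₁.disjoint h₂ h₁₂) (h₁.disjoint h₃ h₁₃) (h₂.disjoint h₃ h₂₃) hW₁ hW₂ hW₃ with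
    hJ | hJ | hJ
  exacts [⟨J₁, h₁, hJ⟩, ⟨J₂, h₂, hJ⟩, ⟨J₃, h₃, hJ⟩]

theorem compl_subset_image_iterate_of_forall_pathFromTo {f : UI → UI} {P J : Set UI} {m : ℕ}
    (h : ∀ K, IsPartInt P K → PathFromTo f P m J K) : Pᶜ ⊆ f^[m] '' J := fun y hy =>
  (h _ ⟨y, hy, rfl⟩).subset_image_iterate (mem_connectedComponentIn hy)

/-- If `f` is continuous, topologically mixing, has a Markov partition
with at least three partition intervals, and the transition matrix `A(f,P)` is locally
eventually onto, then `f` is locally eventually onto. -/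
theorem stmt_11 (f : UI → UI) (hf : Continuous f) (hmix : Mixing f)
    (P : Set UI) (hP : SlackPartition f P)
    (J₁ J₂ J₃ : Set UI) (h1 : IsPartInt P J₁) (h2 : IsPartInt P J₂)
    (h3 : IsPartInt P J₃) (h12 : J₁ ≠ J₂) (h13 : J₁ ≠ J₃) (h23 : J₂ ≠ J₃)
    (hleo : ∀ J, IsPartInt P J → ∃ n, ∀ K, IsPartInt P K → PathFromTo f P n J K) :
    ∀ U : Set UI, IsOpen U → U.Nonempty → ∃ m, f^[m] '' U = Set.univ := by
  obtain ⟨hPcount, hPclosed, -, -⟩ := hP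
  intro U hU ⟨x, hx⟩
  obtain ⟨a, b, -, hK, hKU⟩ := exists_Icc_mem_subset_of_mem_nhds (hU.mem_nhds hx)
  have hint : (interior (Icc a b)).Nonempty := ⟨x, mem_interior_iff_mem_nhds.2 hK⟩
  have hmeet := fun {J} (hJ : IsPartInt P J) =>
    hmix.eventually_image_inter_nonempty isOpen_interior (hJ.isOpen hPclosed) hint hJ.nonempty
  obtain ⟨n, hn₁, hn₂, hn₃⟩ := ((hmeet h1).and ((hmeet h2).and (hmeet h3))).exists
  have hW : (f^[n] '' Icc a b).OrdConnected :=
    (isPreconnected_Icc.image _ (hf.iterate n).continuousOn).ordConnected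
  have hsub : f^[n] '' interior (Icc a b) ⊆ f^[n] '' Icc a b := image_mono interior_subset
  obtain ⟨J, hJ, hJW⟩ := exists_isPartInt_subset_of_three hW h1 h2 h3 h12 h13 h23
    (hn₁.mono (inter_subset_inter_left _ hsub)) (hn₂.mono (inter_subset_inter_left _ hsub))
    (hn₃.mono (inter_subset_inter_left _ hsub))
  obtain ⟨m, hm⟩ := hleo J hJ
  have hcover : Pᶜ ⊆ f^[m + n] '' Icc a b := by
    rw [Function.iterate_add, image_comp]
    exact (compl_subset_image_iterate_of_forall_pathFromTo hm).trans (image_mono hJW)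
  have hclosed : IsClosed (f^[m + n] '' Icc a b) :=
    (isCompact_Icc.image (hf.iterate _)).isClosed
  have honto : f^[m + n] '' Icc a b = univ := by
    rw [← hclosed.closure_eq]
    exact (hPcount.dense_compl_of_baireSpace.mono hcover).closure_eq
  exact ⟨m + n, eq_univ_of_subset (image_mono hKU) honto⟩
end

section
/- Let f : [0,1] → [0,1] be continuous, topologically mixing, with a taut Markov partition P on which f is P-affine, such that the transition matrix A(f,P) is irreducible and aperiodic and the transition graph Γ(f,P) contains a finite Rome. Then f has no homterval, i.e., no nondegenerate interval U with fⁿ(U) ∩ Crit(f) = ∅ for all n ∈ ℕ. -/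
/-!
Mixing makes the forward images of a nondegenerate interval `U` reach every interior point of
`[0,1]`, so a homterval forces `Crit f ⊆ {0, 1}`. By Rolle's argument a continuous map without
interior local extrema is injective, hence strictly monotone or strictly antitone, and then
`f^[n]` is monotone for infinitely many `n`. A monotone iterate cannot carry points left of
some `m` to the right of it and points right of `m` to the left at the same time, which mixing
would demand.
-/

open Set

/-- Taut Markov partition for `f`. -/
def TautPartition (f : UI → UI) (P : Set UI) : Prop :=
  P.Countable ∧ IsClosed P ∧ MapsTo f P P ∧ Crit f ⊆ P

/-- Infinite path in the transition graph `Γ(f,P)`. -/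
def IsPath (f : UI → UI) (P : Set UI) (c : ℕ → Set UI) : Prop :=
  (∀ n, IsPartInt P (c n)) ∧ ∀ n, c (n + 1) ⊆ f '' c n

/-- The transition matrix `A(f,P)` is irreducible. -/
def Irred (f : UI → UI) (P : Set UI) : Prop :=
  ∀ J K, IsPartInt P J → IsPartInt P K → ∃ n > 0, PathFromTo f P n J K

/-- The transition matrix `A(f,P)` is aperiodic: for each vertex the gcd of its return
times is 1. -/
def Aperiodic (f : UI → UI) (P : Set UI) : Prop :=
  ∀ J, IsPartInt P J → ∀ d : ℕ, (∀ n, 0 < n → PathFromTo f P n J J → d ∣ n) → d = 1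

/-- The transition graph `Γ(f,P)` contains a finite Rome. -/
def FiniteRome (f : UI → UI) (P : Set UI) : Prop :=
  ∃ R : Set (Set UI), R.Finite ∧ ∀ c : ℕ → Set UI, IsPath f P c → ∃ n, c n ∈ R

/-- `f` is affine on each partition interval. -/
def PAffine (f : UI → UI) (P : Set UI) : Prop :=
  ∀ J, IsPartInt P J → ∃ a b : ℝ, ∀ x ∈ J, (f x : ℝ) = a * (x : ℝ) + b

open Filter Topology

section LocalExtr

variable {α β : Type*} [TopologicalSpace α] [LinearOrder α] [Preorder β] {f : α → β} {c : α}
  {V : Set α}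

theorem IsLocalExtr.not_strictMonoOn [(𝓝[<] c).NeBot] [(𝓝[>] c).NeBot] (h : IsLocalExtr f c)
    (hV : V ∈ 𝓝 c) : ¬ StrictMonoOn f V := fun hmono => by
  rcases h with hmin | hmax
  · obtain ⟨x, hxV, hcx, hxc⟩ :=
      (Eventually.and (mem_nhdsWithin_of_mem_nhds hV)
        (Eventually.and (nhdsWithin_le_nhds hmin) self_mem_nhdsWithin)).exists
        (f := 𝓝[<] c)
    exact (hmono hxV (mem_of_mem_nhds hV) hxc).not_ge hcx
  · obtain ⟨x, hxV, hxc, hcx⟩ :=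
      (Eventually.and (mem_nhdsWithin_of_mem_nhds hV)
        (Eventually.and (nhdsWithin_le_nhds hmax) self_mem_nhdsWithin)).exists
        (f := 𝓝[>] c)
    exact (hmono (mem_of_mem_nhds hV) hxV hcx).not_ge hxc

theorem IsLocalExtr.not_strictAntiOn [(𝓝[<] c).NeBot] [(𝓝[>] c).NeBot] (h : IsLocalExtr f c)
    (hV : V ∈ 𝓝 c) : ¬ StrictAntiOn f V := fun hanti => by
  rcases h with hmin | hmax
  · obtain ⟨x, hxV, hcx, hxc⟩ :=
      (Eventually.and (mem_nhdsWithin_of_mem_nhds hV)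
        (Eventually.and (nhdsWithin_le_nhds hmin) self_mem_nhdsWithin)).exists
        (f := 𝓝[>] c)
    exact (hanti (mem_of_mem_nhds hV) hxV hxc).not_ge hcx
  · obtain ⟨x, hxV, hxc, hcx⟩ :=
      (Eventually.and (mem_nhdsWithin_of_mem_nhds hV)
        (Eventually.and (nhdsWithin_le_nhds hmax) self_mem_nhdsWithin)).exists
        (f := 𝓝[<] c)
    exact (hanti hxV (mem_of_mem_nhds hV) hcx).not_ge hxc

end LocalExtr

theorem IsLocalExtr.mem_crit {f : UI → UI} {c : UI} (h : IsLocalExtr f c) : c ∈ Crit f := by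
  rcases eq_or_ne c 0 with rfl | h0
  · exact Or.inl (Or.inl rfl)
  rcases eq_or_ne c 1 with rfl | h1
  · exact Or.inl (Or.inr rfl)
  have := nhdsLT_neBot_of_exists_lt ⟨0, unitInterval.pos_iff_ne_zero.2 h0⟩
  have := nhdsGT_neBot_of_exists_gt ⟨1, unitInterval.lt_one_iff_ne_one.2 h1⟩
  exact Or.inr fun V hV => ⟨h.not_strictMonoOn hV, h.not_strictAntiOn hV⟩

theorem injective_of_crit_subset {f : UI → UI} (hf : Continuous f) (hcrit : Crit f ⊆ {0, 1}) :
    Function.Injective f := by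
  refine Function.Injective.of_lt_imp_ne fun x y hxy hfxy => ?_
  obtain ⟨c, ⟨hxc, hcy⟩, hc⟩ := exists_isLocalExtr_Ioo hxy hf.continuousOn hfxy
  rcases hcrit hc.mem_crit with rfl | rfl
  · exact hxc.not_ge unitInterval.nonneg'
  · exact hcy.not_ge unitInterval.le_one'

namespace Mixing

variable {f : UI → UI}

theorem exists_iterate_mem_image (hmix : Mixing f) (hf : Continuous f) {U : Set UI}
    (hU : U.OrdConnected) {a b : UI} (ha : a ∈ U) (hb : b ∈ U) (hab : a < b) {c : UI}
    (h0c : 0 < c) (hc1 : c < 1) : ∃ n, c ∈ f^[n] '' U := by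
  have hne : (Ioo a b).Nonempty := nonempty_Ioo.2 hab
  obtain ⟨N₁, hN₁⟩ := hmix (Ioo a b) (Iio c) isOpen_Ioo isOpen_Iio hne ⟨0, h0c⟩
  obtain ⟨N₂, hN₂⟩ := hmix (Ioo a b) (Ioi c) isOpen_Ioo isOpen_Ioi hne ⟨1, hc1⟩
  set n := max N₁ N₂
  obtain ⟨x, hx, hxc⟩ := hN₁ n (le_max_left _ _)
  obtain ⟨y, hy, hcy⟩ := hN₂ n (le_max_right _ _)
  have hord : (f^[n] '' Icc a b).OrdConnected :=
    (isPreconnected_Icc.image _ (hf.iterate n).continuousOn).ordConnected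
  have hc : c ∈ f^[n] '' Icc a b :=
    hord.out (image_mono Ioo_subset_Icc_self hx) (image_mono Ioo_subset_Icc_self hy)
      ⟨le_of_lt hxc, le_of_lt hcy⟩
  exact ⟨n, image_mono (hU.out ha hb) hc⟩

theorem exists_forall_not_monotone_iterate (hmix : Mixing f) :
    ∃ N, ∀ n ≥ N, ¬ Monotone f^[n] := by
  obtain ⟨m, h0m, hm1⟩ := exists_between (zero_lt_one' UI)
  obtain ⟨N₁, hN₁⟩ := hmix (Iio m) (Ioi m) isOpen_Iio isOpen_Ioi ⟨0, h0m⟩ ⟨1, hm1⟩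
  obtain ⟨N₂, hN₂⟩ := hmix (Ioi m) (Iio m) isOpen_Ioi isOpen_Iio ⟨1, hm1⟩ ⟨0, h0m⟩
  refine ⟨max N₁ N₂, fun n hn hmono => ?_⟩
  obtain ⟨_, ⟨x, hxm, rfl⟩, hmx⟩ := hN₁ n (le_of_max_le_left hn)
  obtain ⟨_, ⟨y, hmy, rfl⟩, hym⟩ := hN₂ n (le_of_max_le_right hn)
  exact (hmono (lt_trans hxm hmy).le).not_gt (lt_trans hym hmx)

theorem not_injective (hmix : Mixing f) (hf : Continuous f) : ¬ Function.Injective f := by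
  intro hinj
  obtain ⟨N, hN⟩ := hmix.exists_forall_not_monotone_iterate
  rcases hf.strictMono_of_inj hinj with hmono | hanti
  · exact hN N le_rfl (hmono.monotone.iterate N)
  · refine hN (2 * N) (by omega) ?_
    rw [Function.iterate_mul]
    exact (hanti.antitone.comp hanti.antitone).iterate N

end Mixing

theorem stmt_14_general (f : UI → UI) (hf : Continuous f) (hmix : Mixing f) :
    ¬ ∃ U : Set UI, U.OrdConnected ∧ (∃ a ∈ U, ∃ b ∈ U, a < b) ∧
      ∀ n : ℕ, f^[n] '' U ∩ Crit f = ∅ := by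
  rintro ⟨U, hU, ⟨a, ha, b, hb, hab⟩, hhom⟩
  have hcrit : Crit f ⊆ {0, 1} := by
    intro c hc
    by_contra hc01
    obtain ⟨n, hn⟩ := hmix.exists_iterate_mem_image hf hU ha hb hab
      (unitInterval.pos_iff_ne_zero.2 fun h => hc01 (Or.inl h))
      (unitInterval.lt_one_iff_ne_one.2 fun h => hc01 (Or.inr h))
    exact (hhom n).subset ⟨hn, hc⟩
  exact hmix.not_injective hf (injective_of_crit_subset hf hcrit)

/-- If `f` is continuous, topologically mixing, `P`-affine for a taut
Markov partition `P`, with `A(f,P)` irreducible and aperiodic and `Γ(f,P)` containing a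
finite Rome, then `f` has no homterval: there is no nondegenerate interval `U` with
`fⁿ(U) ∩ Crit(f) = ∅` for all `n`. -/
theorem stmt_14 (f : UI → UI) (hf : Continuous f) (hmix : Mixing f)
    (P : Set UI) (hP : TautPartition f P) (haff : PAffine f P)
    (hirr : Irred f P) (haper : Aperiodic f P) (hrome : FiniteRome f P) :
    ¬ ∃ U : Set UI, U.OrdConnected ∧ (∃ a ∈ U, ∃ b ∈ U, a < b) ∧
      ∀ n : ℕ, f^[n] '' U ∩ Crit f = ∅ :=
  stmt_14_general f hf hmix
end
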